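/- In LFI3 the relation α ≡ β := (α↔β) ∧ (¬α↔¬β) ∧ (¬∘α↔¬∘β) is a congruence. Concretely: (i) for every valuation h over the LFI3 matrix and all formulas α, β, h(α≡β) is designated if and only if h(α)=h(β); consequently (ii) the relation α ≈ β, defined by ⊨_LFI3 α≡β, is an equivalence relation on formulas that is compatible with all connectives ¬, ∘, ∧, ∨, →. -/

import Mathlib

/-- Formulas of the language with ¬, ∘, ∧, ∨, →. -/
inductive Fm : Type
  | atom : Nat → Fm
  | neg : Fm → Fm
  | circ : Fm → Fm
  | conj : Fm → Fm → Fm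
  | disj : Fm → Fm → Fm
  | impl : Fm → Fm → Fm

/-- The five truth values of LFI3: T=(1,0,0), t=(1,0,1), b=(1,1,1), f=(0,1,1), F=(0,1,0). -/
inductive V5 : Type
  | T | t | b | f | F
deriving DecidableEq

open V5

/-- Rank in the linear order F < f < b < t < T. -/
def rk : V5 → Nat
  | F => 0 | f => 1 | b => 2 | t => 3 | T => 4

/-- Infimum in the linear order F < f < b < t < T. -/
def min5 (x y : V5) : V5 := if rk x ≤ rk y then x else y

/-- Supremum in the linear order F < f < b < t < T. -/
def max5 (x y : V5) : V5 := if rk x ≤ rk y then y else x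

/-- Negation: ¬(a₁,a₂,a₃) = (a₂,a₁,a₃). -/
def neg5 : V5 → V5
  | T => F | t => f | b => b | f => t | F => T

/-- Consistency: ∘(a₁,a₂,a₃) = (~(a₁∧a₂), a₃, a₃∧~(a₁∧a₂)). -/
def circ5 : V5 → V5
  | T => T | t => b | b => F | f => b | F => T

/-- Strong negation ~a := ¬a ∧ ∘a. -/
def snd5 (x : V5) : V5 := min5 (neg5 x) (circ5 x)

/-- Implication a→b := ~a ∨ b. -/
def imp5 (x y : V5) : V5 := max5 (snd5 x) y

/-- Designated values: D = {T, t, b}. -/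
def des (x : V5) : Prop := 2 ≤ rk x

/-- The valuation (homomorphism into the LFI3 algebra) extending an atom assignment. -/
def ev (v : Nat → V5) : Fm → V5
  | Fm.atom n => v n
  | Fm.neg a => neg5 (ev v a)
  | Fm.circ a => circ5 (ev v a)
  | Fm.conj a c => min5 (ev v a) (ev v c)
  | Fm.disj a c => max5 (ev v a) (ev v c)
  | Fm.impl a c => imp5 (ev v a) (ev v c)

/-- Semantical consequence of LFI3. -/
def L3Cons (Γ : Set Fm) (ψ : Fm) : Prop :=
  ∀ v : Nat → V5, (∀ γ ∈ Γ, des (ev v γ)) → des (ev v ψ)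

/-- Biimplication α↔β := (α→β)∧(β→α). -/
def Fm.biim (a c : Fm) : Fm := (a.impl c).conj (c.impl a)

/-- The congruence formula α ≡ β := (α↔β) ∧ (¬α↔¬β) ∧ (¬∘α↔¬∘β). -/
def eqF (a c : Fm) : Fm :=
  (Fm.biim a c).conj ((Fm.biim a.neg c.neg).conj (Fm.biim a.circ.neg c.circ.neg))

/-- The relation α ≈ β defined by ⊨_LFI3 α ≡ β. -/
def congRel (a c : Fm) : Prop := ∀ v : Nat → V5, des (ev v (eqF a c))


/-!
A formula `φ → ψ` is designated exactly when `φ` is undesignated or `ψ` is designated, since the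
strong negation `~x` is designated exactly on the undesignated values. Hence `h(α ↔ β)` is
designated iff `h α` and `h β` are both designated or both undesignated, and `h(α ≡ β)` is
designated iff `x ↦ (x ∈ D, ¬x ∈ D, ¬∘x ∈ D)` agrees on `h α` and `h β`. On
`T, t, b, f, F` this map takes the values `(1,0,0), (1,0,1), (1,1,1), (0,1,1), (0,1,0)`: it recovers
the defining triples, so it is injective. Thus `α ≈ β` says that `α` and `β` have the same value
under every valuation, which is plainly a congruence because valuations are homomorphisms.
-/

instance : DecidablePred des := fun x => inferInstanceAs (Decidable (2 ≤ rk x))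

def biim5 (x y : V5) : V5 := min5 (imp5 x y) (imp5 y x)

def eqv5 (x y : V5) : V5 :=
  min5 (biim5 x y) (min5 (biim5 (neg5 x) (neg5 y)) (biim5 (neg5 (circ5 x)) (neg5 (circ5 y))))

lemma ev_eqF (v : Nat → V5) (α β : Fm) : ev v (eqF α β) = eqv5 (ev v α) (ev v β) := rfl

lemma des_min5 (x y : V5) : des (min5 x y) ↔ des x ∧ des y := by
  cases x <;> cases y <;> decide

lemma des_imp5 (x y : V5) : des (imp5 x y) ↔ (des x → des y) := by
  cases x <;> cases y <;> decide

lemma des_biim5 (x y : V5) : des (biim5 x y) ↔ (des x ↔ des y) := by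
  rw [biim5, des_min5, des_imp5, des_imp5]
  exact iff_def.symm

lemma eq_of_des_iff_of_des_neg_iff_of_des_neg_circ_iff {x y : V5} (h : des x ↔ des y)
    (hneg : des (neg5 x) ↔ des (neg5 y))
    (hcirc : des (neg5 (circ5 x)) ↔ des (neg5 (circ5 y))) : x = y := by
  revert h hneg hcirc
  cases x <;> cases y <;> decide

lemma des_eqv5_iff (x y : V5) : des (eqv5 x y) ↔ x = y := by
  simp only [eqv5, des_min5, des_biim5]
  constructor
  · rintro ⟨h, hneg, hcirc⟩
    exact eq_of_des_iff_of_des_neg_iff_of_des_neg_circ_iff h hneg hcirc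
  · rintro rfl
    exact ⟨Iff.rfl, Iff.rfl, Iff.rfl⟩

lemma des_ev_eqF_iff (v : Nat → V5) (α β : Fm) : des (ev v (eqF α β)) ↔ ev v α = ev v β := by
  rw [ev_eqF, des_eqv5_iff]

lemma congRel_iff (α β : Fm) : congRel α β ↔ ∀ v, ev v α = ev v β :=
  forall_congr' fun v => des_ev_eqF_iff v α β

lemma congRel_equivalence : Equivalence congRel := by
  have hkernel : congRel = InvImage Eq fun α v => ev v α := by
    funext α β
    simp only [InvImage, congRel_iff, funext_iff]
  rw [hkernel]
  exact InvImage.equivalence _ _ eq_equivalence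

namespace congRel

variable {α α' β β' : Fm}

lemma neg (h : congRel α β) : congRel α.neg β.neg := by
  rw [congRel_iff] at h ⊢
  exact fun v => congrArg neg5 (h v)

lemma circ (h : congRel α β) : congRel α.circ β.circ := by
  rw [congRel_iff] at h ⊢
  exact fun v => congrArg circ5 (h v)

lemma conj (hα : congRel α α') (hβ : congRel β β') : congRel (α.conj β) (α'.conj β') := by
  rw [congRel_iff] at hα hβ ⊢
  exact fun v => congrArg₂ min5 (hα v) (hβ v)

lemma disj (hα : congRel α α') (hβ : congRel β β') : congRel (α.disj β) (α'.disj β') := by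
  rw [congRel_iff] at hα hβ ⊢
  exact fun v => congrArg₂ max5 (hα v) (hβ v)

lemma impl (hα : congRel α α') (hβ : congRel β β') : congRel (α.impl β) (α'.impl β') := by
  rw [congRel_iff] at hα hβ ⊢
  exact fun v => congrArg₂ imp5 (hα v) (hβ v)

end congRel

/-- The relation ≡ is a congruence in LFI3: (i) h(α≡β) is designated iff h(α)=h(β);
(ii) the induced relation is an equivalence compatible with all connectives. -/
theorem stmt12 :
    (∀ (v : Nat → V5) (α β : Fm), des (ev v (eqF α β)) ↔ ev v α = ev v β) ∧
    Equivalence congRel ∧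
    (∀ α β : Fm, congRel α β → congRel α.neg β.neg) ∧
    (∀ α β : Fm, congRel α β → congRel α.circ β.circ) ∧
    (∀ α α' β β' : Fm, congRel α α' → congRel β β' → congRel (α.conj β) (α'.conj β')) ∧
    (∀ α α' β β' : Fm, congRel α α' → congRel β β' → congRel (α.disj β) (α'.disj β')) ∧
    (∀ α α' β β' : Fm, congRel α α' → congRel β β' → congRel (α.impl β) (α'.impl β')) :=
  ⟨des_ev_eqF_iff, congRel_equivalence, fun _ _ => congRel.neg, fun _ _ => congRel.circ,
    fun _ _ _ _ => congRel.conj, fun _ _ _ _ => congRel.disj, fun _ _ _ _ => congRel.impl⟩
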